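/- arXiv:math/0506347 — 4 statements merged into one kernel-verified Lean document; each statement's English description precedes it below -/
import Mathlib

section
/- Fix an integer h ≥ 2 and let 1 ≤ k, l ≤ h−1. The ℂ-vector space of pairs (p, q) of homogeneous polynomials in ℂ[x] of degrees 0 and l−k respectively, satisfying x^l·p = x^k·q and x^{h−l}·q = x^{h−k}·p, has dimension 1 if k ≤ l and dimension 0 if k > l. Moreover, every null-homotopic degree-0 morphism from M_{k,0} to M_{l,0} is zero, so this space computes Hom(M_{k,0}, M_{l,0}) in D^b_ℤ(𝒜_{x^h}). -/
open Polynomial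

noncomputable section

/-- Polynomials in `ℂ[x]` that are homogeneous (monomial) of degree `d ∈ ℤ`; by
convention this is `{0}` when `d < 0` or when no monomial of that degree exists. -/
def homogDeg (d : ℤ) : Submodule ℂ (Polynomial ℂ) where
  carrier := {p | ∀ n : ℕ, p.coeff n ≠ 0 → (n : ℤ) = d}
  zero_mem' := by intro n hn; simp at hn
  add_mem' := by
    intro p q hp hq n hn
    rw [Polynomial.coeff_add] at hn
    by_cases h1 : p.coeff n = 0
    · exact hq n (by simpa [h1] using hn)
    · exact hp n h1
  smul_mem' := by
    intro c p hp n hn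
    rw [Polynomial.coeff_smul, smul_eq_mul] at hn
    exact hp n (right_ne_zero_of_mul hn)

/-- The submodule of pairs `(p, q)` intertwining `Q_k` and `Q_l`:
`x^l·p = x^k·q` and `x^{h−l}·q = x^{h−k}·p`. -/
def intertwine (h k l : ℕ) : Submodule ℂ (Polynomial ℂ × Polynomial ℂ) where
  carrier := {pq | X ^ l * pq.1 = X ^ k * pq.2 ∧ X ^ (h - l) * pq.2 = X ^ (h - k) * pq.1}
  zero_mem' := by simp
  add_mem' := by
    rintro a b ⟨ha1, ha2⟩ ⟨hb1, hb2⟩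
    constructor <;> simp [mul_add, ha1, ha2, hb1, hb2]
  smul_mem' := by
    rintro c a ⟨ha1, ha2⟩
    constructor <;> simp [Algebra.mul_smul_comm, ha1, ha2]

/-- The closed degree-0 graded morphisms from `M_{k,i}` to `M_{l,j}`: pairs `(p, q)` of
homogeneous polynomials of degrees `j−i` and `(l+j)−(k+i)` with `Q_l·diag(p,q) = diag(p,q)·Q_k`. -/
def closedMor (h k l : ℕ) (i j : ℤ) : Submodule ℂ (Polynomial ℂ × Polynomial ℂ) :=
  ((homogDeg (j - i)).prod (homogDeg (((l : ℤ) + j) - ((k : ℤ) + i)))) ⊓ intertwine h k l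

/-- The linear map sending a homotopy `(ψ₁, ψ₂)` to the null-homotopic morphism
`(x^{h−l}·ψ₂ + x^k·ψ₁, x^l·ψ₁ + x^{h−k}·ψ₂)`. -/
def htpyMap (h k l : ℕ) : (Polynomial ℂ × Polynomial ℂ) →ₗ[ℂ] (Polynomial ℂ × Polynomial ℂ) where
  toFun ψ := (X ^ (h - l) * ψ.2 + X ^ k * ψ.1, X ^ l * ψ.1 + X ^ (h - k) * ψ.2)
  map_add' := by
    intro a b
    simp only [Prod.fst_add, Prod.snd_add, mul_add, Prod.mk_add_mk]
    exact Prod.ext (by ring) (by ring)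
  map_smul' := by
    intro c a
    simp only [Prod.smul_fst, Prod.smul_snd, Algebra.mul_smul_comm, RingHom.id_apply,
      Prod.smul_mk, smul_add]

/-- The null-homotopic degree-0 graded morphisms from `M_{k,i}` to `M_{l,j}`: those of the
form `(x^{h−l}·ψ₂ + x^k·ψ₁, x^l·ψ₁ + x^{h−k}·ψ₂)` for homogeneous `ψ₁, ψ₂` of degrees
`j−(k+i)` and `(l+j)−i−h`. -/
def nullHtpyMor (h k l : ℕ) (i j : ℤ) : Submodule ℂ (Polynomial ℂ × Polynomial ℂ) :=
  Submodule.map (htpyMap h k l)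
    ((homogDeg (j - ((k : ℤ) + i))).prod (homogDeg (((l : ℤ) + j) - i - (h : ℤ))))

/-- `Hom(M_{k,i}, M_{l,j})` in `D^b_ℤ(𝒜_{x^h})`: closed degree-0 graded morphisms modulo
null-homotopic ones. -/
abbrev HomMF (h k l : ℕ) (i j : ℤ) : Type :=
  closedMor h k l i j ⧸ ((nullHtpyMor h k l i j).comap (closedMor h k l i j).subtype)


lemma homogDeg_eq_bot {d : ℤ} (hd : d < 0) : homogDeg d = ⊥ := by
  refine eq_bot_iff.mpr fun p hp => (Submodule.mem_bot ℂ).mpr ?_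
  ext n
  by_contra hn
  have := hp n hn
  omega

lemma eq_monomial_of_mem_homogDeg {n : ℕ} {p : ℂ[X]} (hp : p ∈ homogDeg n) :
    p = monomial n (p.coeff n) := by
  ext m
  rw [coeff_monomial]
  by_cases hm : p.coeff m = 0
  · split_ifs <;> simp_all
  · obtain rfl : m = n := by exact_mod_cast hp m hm
    simp

lemma X_pow_mem_homogDeg (n : ℕ) : (X ^ n : ℂ[X]) ∈ homogDeg n := by
  intro m hm
  rw [coeff_X_pow] at hm
  split_ifs at hm with hmn
  · rw [hmn]
  · exact absurd rfl hm

section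

variable {h k l : ℕ}

lemma mem_closedMor_zero_zero {pq : ℂ[X] × ℂ[X]} :
    pq ∈ closedMor h k l 0 0 ↔
      pq.1 ∈ homogDeg 0 ∧ pq.2 ∈ homogDeg ((l : ℤ) - k) ∧ pq ∈ intertwine h k l := by
  simp only [closedMor, Submodule.mem_inf, Submodule.mem_prod, sub_zero, add_zero, and_assoc]

lemma mem_closedMor_zero_zero_one_X_pow (hkl : k ≤ l) (hlh : l ≤ h) :
    ((1 : ℂ[X]), (X ^ (l - k) : ℂ[X])) ∈ closedMor h k l 0 0 := by
  refine mem_closedMor_zero_zero.mpr ⟨?_, ?_, ?_, ?_⟩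
  · simpa using X_pow_mem_homogDeg 0
  · simpa [Nat.cast_sub hkl] using X_pow_mem_homogDeg (l - k)
  · change X ^ l * 1 = X ^ k * X ^ (l - k)
    rw [mul_one, ← pow_add, Nat.add_sub_cancel' hkl]
  · change X ^ (h - l) * X ^ (l - k) = X ^ (h - k) * 1
    rw [mul_one, ← pow_add]
    congr 1
    omega

/-- The first intertwining equation forces `q = x^{l-k}·p`, and `p` is a constant. -/
lemma closedMor_zero_zero_eq_span (hkl : k ≤ l) (hlh : l ≤ h) :
    closedMor h k l 0 0 = ℂ ∙ ((1 : ℂ[X]), (X ^ (l - k) : ℂ[X])) := by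
  refine le_antisymm ?_
    ((Submodule.span_singleton_le_iff_mem _ _).mpr (mem_closedMor_zero_zero_one_X_pow hkl hlh))
  rintro ⟨p, q⟩ hpq
  obtain ⟨hp, -, hlk, -⟩ := mem_closedMor_zero_zero.mp hpq
  have hp_const : p = C (p.coeff 0) := by
    simpa using eq_monomial_of_mem_homogDeg (n := 0) (by simpa using hp)
  have hq : q = X ^ (l - k) * p := by
    refine mul_left_cancel₀ (pow_ne_zero k X_ne_zero) ?_
    rw [← mul_assoc, ← pow_add, Nat.add_sub_cancel' hkl]
    exact hlk.symm
  refine Submodule.mem_span_singleton.mpr ⟨p.coeff 0, Prod.ext ?_ ?_⟩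
  · simp only [Prod.smul_fst, smul_eq_C_mul, mul_one]
    exact hp_const.symm
  · simp only [Prod.smul_snd, smul_eq_C_mul, hq, mul_comm, ← hp_const]

lemma closedMor_zero_zero_eq_bot (hlk : l < k) : closedMor h k l 0 0 = ⊥ := by
  refine eq_bot_iff.mpr ?_
  rintro ⟨p, q⟩ hpq
  obtain ⟨-, hq, hlk', -⟩ := mem_closedMor_zero_zero.mp hpq
  rw [homogDeg_eq_bot (by omega), Submodule.mem_bot] at hq
  change q = 0 at hq
  change X ^ l * p = X ^ k * q at hlk'
  rw [hq, mul_zero] at hlk'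
  have hp : p = 0 := (mul_eq_zero.mp hlk').resolve_left (pow_ne_zero l X_ne_zero)
  exact (Submodule.mem_bot ℂ).mpr (Prod.ext hp hq)

lemma finrank_closedMor_zero_zero (hlh : l ≤ h) :
    Module.finrank ℂ (closedMor h k l 0 0) = if k ≤ l then 1 else 0 := by
  split_ifs with hkl
  · rw [closedMor_zero_zero_eq_span hkl hlh]
    exact finrank_span_singleton (by simp)
  · rw [closedMor_zero_zero_eq_bot (not_le.mp hkl), finrank_bot]

/-- Both homotopy components have negative degree `-k` and `l - h`. -/
lemma nullHtpyMor_zero_zero_eq_bot (hk : 0 < k) (hlh : l < h) : nullHtpyMor h k l 0 0 = ⊥ := by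
  rw [nullHtpyMor, homogDeg_eq_bot (by omega), homogDeg_eq_bot (by omega), Submodule.prod_bot,
    Submodule.map_bot]

end

theorem hom_M_k0_M_l0_general (h : ℕ) (k l : ℕ)
    (hk : 1 ≤ k) (hl : 1 ≤ l) (hl' : l ≤ h - 1) :
    Module.finrank ℂ (closedMor h k l 0 0) = (if k ≤ l then 1 else 0) ∧
    nullHtpyMor h k l 0 0 = ⊥ ∧
    Module.finrank ℂ (HomMF h k l 0 0) = (if k ≤ l then 1 else 0) := by
  have hlh : l < h := by omega
  have hclosed := finrank_closedMor_zero_zero (k := k) hlh.le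
  have hnull := nullHtpyMor_zero_zero_eq_bot hk hlh
  have hrel : (nullHtpyMor h k l 0 0).comap (closedMor h k l 0 0).subtype = ⊥ := by
    rw [hnull, Submodule.comap_bot, Submodule.ker_subtype]
  exact ⟨hclosed, hnull, (Submodule.quotEquivOfEqBot _ hrel).finrank_eq.trans hclosed⟩

/-- `Hom(M_{k,0}, M_{l,0}) = ℂ` if `k ≤ l` and `0` if `k > l`: the space of closed
morphisms has dimension 1 or 0 accordingly, every null-homotopic morphism from
`M_{k,0}` to `M_{l,0}` is zero, and hence the same dimension formula holds for `Hom`. -/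
theorem hom_M_k0_M_l0 (h : ℕ) (hh : 2 ≤ h) (k l : ℕ)
    (hk : 1 ≤ k) (hk' : k ≤ h - 1) (hl : 1 ≤ l) (hl' : l ≤ h - 1) :
    Module.finrank ℂ (closedMor h k l 0 0) = (if k ≤ l then 1 else 0) ∧
    nullHtpyMor h k l 0 0 = ⊥ ∧
    Module.finrank ℂ (HomMF h k l 0 0) = (if k ≤ l then 1 else 0) :=
  hom_M_k0_M_l0_general h k l hk hl hl'
end
end

section
/- Fix an integer h ≥ 2, let 1 ≤ k, l ≤ h−1 and i, j ∈ ℤ. If there exists a nonzero closed degree-0 graded morphism from M_{k,i} to M_{l,j}, then k + 2i ≤ l + 2j. Equivalently, if the phases satisfy (k+2i)/h − 1/2 > (l+2j)/h − 1/2 then Hom(M_{k,i}, M_{l,j}) = 0. -/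
open Polynomial

noncomputable section

lemma homogDeg_eq_zero_of_neg {d : ℤ} (hd : d < 0) {p : Polynomial ℂ}
    (hp : p ∈ homogDeg d) : p = 0 := by
  ext n
  by_contra hn
  have := hp n hn
  omega

lemma fst_eq_zero_iff_snd_eq_zero_of_mem_intertwine {h k l : ℕ}
    {pq : Polynomial ℂ × Polynomial ℂ} (hpq : pq ∈ intertwine h k l) :
    pq.1 = 0 ↔ pq.2 = 0 := by
  have hX : ∀ n : ℕ, (X : Polynomial ℂ) ^ n ≠ 0 := fun n => pow_ne_zero n X_ne_zero
  constructor
  · intro hp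
    rw [← mul_eq_zero_iff_left (hX k), ← hpq.1, hp, mul_zero]
  · intro hq
    rw [← mul_eq_zero_iff_left (hX l), hpq.1, hq, mul_zero]

/-- The degrees `j − i` and `(l + j) − (k + i)` of the two components add up to
`(l + 2j) − (k + 2i)`, so one of them is negative; that component vanishes, and the
intertwining relation `x^l·p = x^k·q` kills the other. -/
lemma eq_zero_of_mem_closedMor {h k l : ℕ} {i j : ℤ} (hlt : (l : ℤ) + 2 * j < k + 2 * i)
    {pq : Polynomial ℂ × Polynomial ℂ} (hpq : pq ∈ closedMor h k l i j) : pq = 0 := by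
  obtain ⟨⟨hp, hq⟩, hint⟩ := Submodule.mem_inf.mp hpq
  have hfst := fst_eq_zero_iff_snd_eq_zero_of_mem_intertwine hint
  have hneg : j - i < 0 ∨ ((l : ℤ) + j) - (k + i) < 0 := by omega
  rcases hneg with hd | hd
  · have hp0 := homogDeg_eq_zero_of_neg hd hp
    exact Prod.ext hp0 (hfst.mp hp0)
  · have hq0 := homogDeg_eq_zero_of_neg hd hq
    exact Prod.ext (hfst.mpr hq0) hq0

lemma lt_of_div_lt_div_of_nonneg {α : Type*} [Field α] [LinearOrder α] [IsStrictOrderedRing α]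
    {a b c : α} (hc : 0 ≤ c) (hab : a / c < b / c) : a < b :=
  lt_of_not_ge fun hba => (div_le_div_of_nonneg_right hba hc).not_gt hab

theorem hom_vanishing_for_decreasing_phase_general (h : ℕ) (k l : ℕ) (i j : ℤ) :
    (∀ pq ∈ closedMor h k l i j, pq ≠ 0 → (k : ℤ) + 2 * i ≤ (l : ℤ) + 2 * j) ∧
    ((((k : ℚ) + 2 * (i : ℚ)) / (h : ℚ) - 1 / 2 > ((l : ℚ) + 2 * (j : ℚ)) / (h : ℚ) - 1 / 2) →
      ∀ x : HomMF h k l i j, x = 0) := by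
  refine ⟨fun pq hpq hne => not_lt.mp fun hlt => hne (eq_zero_of_mem_closedMor hlt hpq),
    fun hphase x => ?_⟩
  have hlt : (l : ℤ) + 2 * j < k + 2 * i := by
    have := (sub_lt_sub_iff_right _).mp hphase
    exact_mod_cast lt_of_div_lt_div_of_nonneg h.cast_nonneg this
  induction x using Submodule.Quotient.induction_on with
  | H y =>
    obtain rfl : y = 0 := Subtype.ext (eq_zero_of_mem_closedMor hlt y.2)
    rfl

/-- `Hom(M_{k,i}, M_{l,j}) ≠ 0` only if `k + 2i ≤ l + 2j`: any nonzero closed degree-0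
graded morphism forces `k + 2i ≤ l + 2j`; equivalently, if the phase of `M_{k,i}`
exceeds the phase of `M_{l,j}` then `Hom(M_{k,i}, M_{l,j}) = 0`. -/
theorem hom_vanishing_for_decreasing_phase (h : ℕ) (hh : 2 ≤ h) (k l : ℕ)
    (hk : 1 ≤ k) (hk' : k ≤ h - 1) (hl : 1 ≤ l) (hl' : l ≤ h - 1) (i j : ℤ) :
    (∀ pq ∈ closedMor h k l i j, pq ≠ 0 → (k : ℤ) + 2 * i ≤ (l : ℤ) + 2 * j) ∧
    ((((k : ℚ) + 2 * (i : ℚ)) / (h : ℚ) - 1 / 2 > ((l : ℚ) + 2 * (j : ℚ)) / (h : ℚ) - 1 / 2) →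
      ∀ x : HomMF h k l i j, x = 0) :=
  hom_vanishing_for_decreasing_phase_general h k l i j
end
end

section
/- Fix an integer h ≥ 2 and let 1 ≤ k, l ≤ h−1. Then: (a) for every nonzero integer s, Hom(M_{k,0}, M_{l, s·h}) = 0; and (b) for every integer s, Hom(M_{k,0}, M_{h−l, l + s·h}) = 0. (Here M_{l, s·h} represents M_{l,0}[2s] and M_{h−l, l+s·h} represents M_{l,0}[2s+1], so the statement says Hom(M_{k,0}, M_{l,0}[m]) = 0 for all m ≠ 0.) -/
open Polynomial

noncomputable section

/-!
Every closed morphism `(p, q) : M_{k,i} → M_{l,j}` is null-homotopic as soon as `j - i < 0`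
or `j - i ≥ h - l`. In the first case `p` is homogeneous of negative degree, so `p = 0`, and
then `q = 0` from `x^l p = x^k q`. In the second case `x^{h-l}` divides the monomial `p`, say
`p = x^{h-l} ψ`, where `ψ` has exactly the degree `(l + j) - i - h` required of a homotopy;
the relation `x^{h-l} q = x^{h-k} p` forces `q = x^{h-k} ψ`, so `(p, q)` is the image of the
homotopy `(0, ψ)`. The shifts `M_{l,0}[m]`, `m ≠ 0`, all fall into one of these two ranges.
-/

lemma eq_zero_of_mem_homogDeg_of_neg {d : ℤ} (hd : d < 0) {p : ℂ[X]} (hp : p ∈ homogDeg d) :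
    p = 0 := by
  ext n
  by_contra hn
  have := hp n hn
  omega

lemma exists_eq_X_pow_mul_of_mem_homogDeg {d : ℤ} {m : ℕ} (hm : (m : ℤ) ≤ d) {p : ℂ[X]}
    (hp : p ∈ homogDeg d) : ∃ ψ ∈ homogDeg (d - m), p = X ^ m * ψ := by
  have hdvd : X ^ m ∣ p := X_pow_dvd_iff.mpr fun n hn => by
    by_contra hc
    have := hp n hc
    omega
  obtain ⟨ψ, rfl⟩ := hdvd
  refine ⟨ψ, fun n hn => ?_, rfl⟩
  have := hp (n + m) (by rwa [coeff_X_pow_mul])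
  push_cast at this
  omega

variable {h k l : ℕ} {i j : ℤ} {pq : ℂ[X] × ℂ[X]}

lemma eq_zero_of_mem_closedMor_of_lt (hji : j < i) (hpq : pq ∈ closedMor h k l i j) :
    pq = 0 := by
  obtain ⟨⟨hp, -⟩, hlk, -⟩ := hpq
  have hp0 : pq.1 = 0 := eq_zero_of_mem_homogDeg_of_neg (by omega) hp
  have hq0 : pq.2 = 0 := by
    rw [hp0, mul_zero, eq_comm, mul_eq_zero] at hlk
    exact hlk.resolve_left (pow_ne_zero k X_ne_zero)
  exact Prod.ext hp0 hq0

lemma mem_nullHtpyMor_of_mem_closedMor (hlh : l ≤ h) (hji : (h : ℤ) - l ≤ j - i)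
    (hpq : pq ∈ closedMor h k l i j) : pq ∈ nullHtpyMor h k l i j := by
  obtain ⟨p, q⟩ := pq
  obtain ⟨⟨hp, -⟩, -, hhk : X ^ (h - l) * q = X ^ (h - k) * p⟩ := hpq
  obtain ⟨ψ, hψ, rfl⟩ :=
    exists_eq_X_pow_mul_of_mem_homogDeg (m := h - l) (by push_cast [hlh]; exact hji) hp
  have hq : q = X ^ (h - k) * ψ :=
    mul_left_cancel₀ (pow_ne_zero (h - l) X_ne_zero) (by rw [hhk]; ring)
  have hdeg : j - i - ((h - l : ℕ) : ℤ) = l + j - i - h := by push_cast [hlh]; ring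
  exact ⟨(0, ψ), ⟨zero_mem _, hdeg ▸ hψ⟩, by simp [htpyMap, hq]⟩

lemma closedMor_le_nullHtpyMor (hlh : l ≤ h) (hji : j < i ∨ (h : ℤ) - l ≤ j - i) :
    closedMor h k l i j ≤ nullHtpyMor h k l i j := fun _ hpq =>
  hji.elim (fun hlt => (eq_zero_of_mem_closedMor_of_lt hlt hpq).symm ▸ zero_mem _)
    (fun hge => mem_nullHtpyMor_of_mem_closedMor hlh hge hpq)

lemma HomMF.subsingleton (hlh : l ≤ h) (hji : j < i ∨ (h : ℤ) - l ≤ j - i) :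
    Subsingleton (HomMF h k l i j) :=
  Submodule.Quotient.subsingleton_iff.mpr
    (Submodule.comap_subtype_eq_top.mpr (closedMor_le_nullHtpyMor hlh hji))

theorem no_higher_extensions_general (h : ℕ) (hh : 2 ≤ h) (k l : ℕ)
    (hl' : l ≤ h - 1) :
    (∀ s : ℤ, s ≠ 0 → ∀ x : HomMF h k l 0 (s * (h : ℤ)), x = 0) ∧
    (∀ s : ℤ, ∀ x : HomMF h k (h - l) 0 ((l : ℤ) + s * (h : ℤ)), x = 0) := by
  have hlh : l < h := by omega
  have hhz : (2 : ℤ) ≤ h := by exact_mod_cast hh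
  refine ⟨fun s hs x => ?_, fun s x => ?_⟩
  · have : Subsingleton (HomMF h k l 0 (s * h)) := by
      refine HomMF.subsingleton hlh.le ?_
      rcases hs.lt_or_gt with hs | hs
      · left; nlinarith
      · right; nlinarith
    exact Subsingleton.elim x 0
  · have : Subsingleton (HomMF h k (h - l) 0 (l + s * h)) := by
      refine HomMF.subsingleton (Nat.sub_le h l) ?_
      push_cast [hlh.le]
      rcases lt_or_ge s 0 with hs | hs
      · left; nlinarith
      · right; nlinarith
    exact Subsingleton.elim x 0

/-- No higher extensions among the exceptional collection `{M_{l,0}}`: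
`Hom(M_{k,0}, M_{l,0}[m]) = 0` for all `m ≠ 0`, where `M_{l,0}[2s] = M_{l,s·h}` and
`M_{l,0}[2s+1] = M_{h−l, l+s·h}`. -/
theorem no_higher_extensions (h : ℕ) (hh : 2 ≤ h) (k l : ℕ)
    (hk : 1 ≤ k) (hk' : k ≤ h - 1) (hl : 1 ≤ l) (hl' : l ≤ h - 1) :
    (∀ s : ℤ, s ≠ 0 → ∀ x : HomMF h k l 0 (s * (h : ℤ)), x = 0) ∧
    (∀ s : ℤ, ∀ x : HomMF h k (h - l) 0 ((l : ℤ) + s * (h : ℤ)), x = 0) :=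
  no_higher_extensions_general h hh k l hl'
end
end

section
/- Fix an integer h ≥ 2 and 1 ≤ k ≤ h−1, and let Q_k = [[0, x^{h−k}],[x^k, 0]] and Q_k′ = [[0, (h−k)x^{h−k−1}],[k·x^{k−1}, 0]] (the entrywise derivative of Q_k). Then for every diagonal matrix Ψ = diag(ψ₁, ψ₂) with ψ₁, ψ₂ ∈ ℂ[x], the supertrace satisfies Str(Q_k′·(Q_k·Ψ + Ψ·Q_k)) = (h−2k)·x^{h−1}·(ψ₁+ψ₂). In particular it is divisible by x^{h−1} = (∂(x^h)/∂x)/h, so the residue of Str(Q_k′·(Q_k·Ψ + Ψ·Q_k))/(h·x^{h−1}) dx vanishes. -/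
/-!
For an off-diagonal `Q = !![0, a; b, 0]` and diagonal `Ψ = diag(p, q)`, the anticommutator
`QΨ + ΨQ` is again off-diagonal with entries `a (p + q)` and `b (p + q)`, so the supertrace of
`Q' (QΨ + ΨQ)` is the Wronskian `W(b, a) = b a' - b' a` times `p + q`. For monomials,
`W(x^k, x^(h-k)) = (h - 2k) x^(h-1)`.
-/

open Polynomial Matrix

namespace Polynomial

theorem X_pow_mul_derivative_X_pow {R : Type*} [CommSemiring R] (m n : ℕ) :
    X ^ m * derivative (X ^ n : R[X]) = (n : R[X]) * X ^ (m + n - 1) := by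
  rcases n with _ | n
  · simp
  · rw [derivative_X_pow, C_eq_natCast, mul_left_comm, ← pow_add]
    congr 2

theorem wronskian_X_pow_X_pow {R : Type*} [CommRing R] (m n : ℕ) :
    wronskian (X ^ m : R[X]) (X ^ n) = ((n : R[X]) - (m : R[X])) * X ^ (m + n - 1) := by
  rw [wronskian, X_pow_mul_derivative_X_pow, mul_comm (derivative _), X_pow_mul_derivative_X_pow,
    add_comm n, sub_mul]

end Polynomial

namespace Matrix

def supertrace {R : Type*} [Sub R] (M : Matrix (Fin 2) (Fin 2) R) : R := M 0 0 - M 1 1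

variable {R : Type*} [CommRing R]

theorem offDiag_mul_diagonal_add_diagonal_mul_offDiag (a b p q : R) :
    !![0, a; b, 0] * diagonal ![p, q] + diagonal ![p, q] * !![0, a; b, 0]
      = !![0, a * (p + q); b * (p + q), 0] := by
  rw [diagonal_vec2, mul_fin_two, mul_fin_two]
  ext i j
  fin_cases i <;> fin_cases j <;> simp <;> ring

theorem supertrace_offDiag_mul_offDiag (a b c d : R) :
    supertrace (!![0, c; d, 0] * !![0, a; b, 0]) = c * b - d * a := by
  simp [supertrace]

end Matrix

theorem trace_vanishes_on_null_homotopic_general (h k : ℕ)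
    (hk' : k ≤ h - 1) (ψ₁ ψ₂ : Polynomial ℂ) :
    let Q : Matrix (Fin 2) (Fin 2) (Polynomial ℂ) := !![0, X ^ (h - k); X ^ k, 0]
    let Q' : Matrix (Fin 2) (Fin 2) (Polynomial ℂ) := Q.map fun p => Polynomial.derivative p
    let Ψ : Matrix (Fin 2) (Fin 2) (Polynomial ℂ) := Matrix.diagonal ![ψ₁, ψ₂]
    let S : Matrix (Fin 2) (Fin 2) (Polynomial ℂ) := Q * Ψ + Ψ * Q
    ((Q' * S) 0 0 - (Q' * S) 1 1
        = ((h : Polynomial ℂ) - 2 * (k : Polynomial ℂ)) * X ^ (h - 1) * (ψ₁ + ψ₂)) ∧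
    (X ^ (h - 1) ∣ ((Q' * S) 0 0 - (Q' * S) 1 1)) := by
  intro Q Q' Ψ S
  have hkh : k ≤ h := hk'.trans (Nat.sub_le h 1)
  have hQ' : Q' = !![0, derivative (X ^ (h - k)); derivative (X ^ k), 0] := by
    ext i j
    fin_cases i <;> fin_cases j <;> simp [Q', Q]
  have hS : S = !![0, X ^ (h - k) * (ψ₁ + ψ₂); X ^ k * (ψ₁ + ψ₂), 0] :=
    offDiag_mul_diagonal_add_diagonal_mul_offDiag _ _ _ _
  have hW := wronskian_X_pow_X_pow (R := ℂ) k (h - k)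
  rw [Nat.add_sub_cancel' hkh, Nat.cast_sub hkh, wronskian] at hW
  have hStr : supertrace (Q' * S)
      = ((h : Polynomial ℂ) - 2 * (k : Polynomial ℂ)) * X ^ (h - 1) * (ψ₁ + ψ₂) := by
    rw [hQ', hS, supertrace_offDiag_mul_offDiag]
    linear_combination (ψ₁ + ψ₂) * hW
  refine ⟨hStr, ?_⟩
  rw [show (Q' * S) 0 0 - (Q' * S) 1 1 = supertrace (Q' * S) from rfl, hStr]
  exact (dvd_mul_left _ _).mul_right _

/-- The trace map vanishes on null-homotopic endomorphisms: for `Q_k` the matrix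
factorization of `x^h` and any even (diagonal) `Ψ = diag(ψ₁, ψ₂)`, the supertrace
`Str(Q_k′·(Q_k·Ψ + Ψ·Q_k))` equals `(h−2k)·x^{h−1}·(ψ₁+ψ₂)`; in particular it is
divisible by `x^{h−1}`, so its residue against `∂(x^h)/∂x = h·x^{h−1}` vanishes. -/
theorem trace_vanishes_on_null_homotopic (h k : ℕ) (hh : 2 ≤ h) (hk : 1 ≤ k)
    (hk' : k ≤ h - 1) (ψ₁ ψ₂ : Polynomial ℂ) :
    let Q : Matrix (Fin 2) (Fin 2) (Polynomial ℂ) := !![0, X ^ (h - k); X ^ k, 0]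
    let Q' : Matrix (Fin 2) (Fin 2) (Polynomial ℂ) := Q.map fun p => Polynomial.derivative p
    let Ψ : Matrix (Fin 2) (Fin 2) (Polynomial ℂ) := Matrix.diagonal ![ψ₁, ψ₂]
    let S : Matrix (Fin 2) (Fin 2) (Polynomial ℂ) := Q * Ψ + Ψ * Q
    ((Q' * S) 0 0 - (Q' * S) 1 1
        = ((h : Polynomial ℂ) - 2 * (k : Polynomial ℂ)) * X ^ (h - 1) * (ψ₁ + ψ₂)) ∧
    (X ^ (h - 1) ∣ ((Q' * S) 0 0 - (Q' * S) 1 1)) :=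
  trace_vanishes_on_null_homotopic_general h k hk' ψ₁ ψ₂
end
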